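/- Let A be a finite idempotent algebra, a,b ∈ A, B = Sg{a,b}, and θ a congruence of B with a^θ ≠ b^θ. Let g be a ternary term operation of A such that g(x, g(x,y,y), g(x,y,y)) = g(x,y,y) for all x,y ∈ A, and such that for all u,v,w ∈ {a,b} the element g(u,v,w) is θ-congruent to the majority element of (u,v,w) (the element of {a,b} occurring at least twice among u,v,w). Then there exist b′ ∈ b^θ and a ternary term operation g′ of A such that g′(a,b′,b′) = g′(b′,a,b′) = g′(b′,b′,a) = b′. -/

import Mathlib

/-!
Pick `c ∈ b^θ` for which `Sg{a,c}` is minimal among the subuniverses `Sg{a,c'}`, `c' ∈ b^θ`.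
Then every `u ∈ b^θ ∩ Sg{a,c}` generates `c` together with `a`, i.e. `τ a u = c` for some
binary term operation `τ`. By the majority hypothesis the three values `g(a,c,c)`, `g(c,a,c)`,
`g(c,c,a)` lie in `b^θ ∩ Sg{a,c}`, and they can be pulled to `c` one coordinate at a time:
`g'(x,y,z) = τ₃(z, τ₂(y, τ₁(x, g(x,y,z))))`. Since binary term operations are idempotent, each
`τᵢ(c, -)` fixes the values already equal to `c` and keeps the others in `b^θ ∩ Sg{a,c}`.
-/


namespace UA

/-- Terms over a signature `(ι, ar)` with `n` variables. -/
inductive Term (ι : Type) (ar : ι → ℕ) (n : ℕ) : Type where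
  | var : Fin n → Term ι ar n
  | app : (i : ι) → (Fin (ar i) → Term ι ar n) → Term ι ar n

/-- Evaluation of a term in an algebra with operations `ops`. -/
def Term.eval {ι : Type} {ar : ι → ℕ} {A : Type} (ops : ∀ i : ι, (Fin (ar i) → A) → A)
    {n : ℕ} : Term ι ar n → (Fin n → A) → A
  | .var j, x => x j
  | .app i ts, x => ops i fun k => Term.eval ops (ts k) x

variable {ι : Type} {ar : ι → ℕ} {A : Type}

/-- An algebra is idempotent if every basic operation is. -/
def Idempotent (ops : ∀ i : ι, (Fin (ar i) → A) → A) : Prop :=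
  ∀ (i : ι) (x : A), ops i (fun _ => x) = x

/-- A subuniverse: a subset closed under all basic operations. -/
def IsSubuniverse (ops : ∀ i : ι, (Fin (ar i) → A) → A) (S : Set A) : Prop :=
  ∀ (i : ι) (xs : Fin (ar i) → A), (∀ k, xs k ∈ S) → ops i xs ∈ S

/-- The subuniverse generated by `X`. -/
def Sg (ops : ∀ i : ι, (Fin (ar i) → A) → A) (X : Set A) : Set A :=
  ⋂₀ {S | IsSubuniverse ops S ∧ X ⊆ S}

/-- A tolerance: a reflexive symmetric compatible binary relation. -/
def IsTolerance (ops : ∀ i : ι, (Fin (ar i) → A) → A) (τ : A → A → Prop) : Prop :=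
  (∀ x, τ x x) ∧ (∀ x y, τ x y → τ y x) ∧
  ∀ (i : ι) (xs ys : Fin (ar i) → A), (∀ k, τ (xs k) (ys k)) → τ (ops i xs) (ops i ys)

/-- A congruence: a compatible equivalence relation. -/
def IsCongruence (ops : ∀ i : ι, (Fin (ar i) → A) → A) (θ : A → A → Prop) : Prop :=
  Equivalence θ ∧
  ∀ (i : ι) (xs ys : Fin (ar i) → A), (∀ k, θ (xs k) (ys k)) → θ (ops i xs) (ops i ys)

/-- A congruence of the subalgebra with universe `B`, viewed as a partial
equivalence relation on the big algebra whose domain is exactly `B` and which is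
compatible with all operations. -/
def IsCongruenceOn (ops : ∀ i : ι, (Fin (ar i) → A) → A) (B : Set A)
    (θ : A → A → Prop) : Prop :=
  (∀ x y, θ x y → x ∈ B ∧ y ∈ B) ∧
  (∀ x ∈ B, θ x x) ∧
  (∀ x y, θ x y → θ y x) ∧
  (∀ x y z, θ x y → θ y z → θ x z) ∧
  ∀ (i : ι) (xs ys : Fin (ar i) → A), (∀ k, θ (xs k) (ys k)) → θ (ops i xs) (ops i ys)

/-- `f` is a binary term operation of the algebra. -/
def IsTermOp2 (ops : ∀ i : ι, (Fin (ar i) → A) → A) (f : A → A → A) : Prop :=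
  ∃ t : Term ι ar 2, ∀ x y, f x y = t.eval ops ![x, y]

/-- `g` is a ternary term operation of the algebra. -/
def IsTermOp3 (ops : ∀ i : ι, (Fin (ar i) → A) → A) (g : A → A → A → A) : Prop :=
  ∃ t : Term ι ar 3, ∀ x y z, g x y z = t.eval ops ![x, y, z]

/-- Connectivity of `a` and `b` in the hypergraph `H(A)` whose hyperedges are the
nonempty proper subuniverses: a chain of hyperedges with consecutive ones
intersecting, the first containing `a`, the last containing `b`. -/
def HConnected (ops : ∀ i : ι, (Fin (ar i) → A) → A) (a b : A) : Prop :=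
  ∃ L : List (Set A),
    (∀ S ∈ L, IsSubuniverse ops S ∧ S.Nonempty ∧ S ≠ Set.univ) ∧
    L.Chain' (fun S T => (S ∩ T).Nonempty) ∧
    ∃ h : L ≠ [], a ∈ L.head h ∧ b ∈ L.getLast h


/-- The majority element of a triple from a two-element set. -/
def maj {A : Type} (u v w : A) [DecidableEq A] : A :=
  if u = v ∨ u = w then u else v

def Term.subst {m n : ℕ} : Term ι ar m → (Fin m → Term ι ar n) → Term ι ar n
  | .var j, σ => σ j
  | .app i ts, σ => .app i fun k => (ts k).subst σ

section Eval

variable {ops : ∀ i : ι, (Fin (ar i) → A) → A} {n : ℕ}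

theorem Term.eval_subst {m : ℕ} (t : Term ι ar m) (σ : Fin m → Term ι ar n) (x : Fin n → A) :
    (t.subst σ).eval ops x = t.eval ops fun j => (σ j).eval ops x := by
  induction t with
  | var j => rfl
  | app i ts ih => simp only [Term.subst, Term.eval, ih]

theorem Term.eval_const (hidem : Idempotent ops) (t : Term ι ar n) (x : A) :
    t.eval ops (fun _ => x) = x := by
  induction t with
  | var j => rfl
  | app i ts ih => simp only [Term.eval, ih]; exact hidem i x

theorem Term.eval_mem {S : Set A} (hS : IsSubuniverse ops S) (t : Term ι ar n)
    {x : Fin n → A} (hx : ∀ j, x j ∈ S) : t.eval ops x ∈ S := by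
  induction t with
  | var j => exact hx j
  | app i ts ih => exact hS i _ ih

theorem IsCongruenceOn.eval {B : Set A} {θ : A → A → Prop} (hθ : IsCongruenceOn ops B θ)
    (t : Term ι ar n) {x y : Fin n → A} (h : ∀ j, θ (x j) (y j)) :
    θ (t.eval ops x) (t.eval ops y) := by
  induction t with
  | var j => exact h j
  | app i ts ih => exact hθ.2.2.2.2 i _ _ ih

end Eval

section Sg

variable (ops : ∀ i : ι, (Fin (ar i) → A) → A)

theorem isSubuniverse_Sg (X : Set A) : IsSubuniverse ops (Sg ops X) :=
  fun i xs hxs => Set.mem_sInter.mpr fun S hS =>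
    hS.1 i xs fun k => Set.mem_sInter.mp (hxs k) S hS

theorem subset_Sg (X : Set A) : X ⊆ Sg ops X :=
  fun _ hx => Set.mem_sInter.mpr fun _ hS => hS.2 hx

variable {ops}

theorem Sg_subset {X S : Set A} (hS : IsSubuniverse ops S) (hX : X ⊆ S) : Sg ops X ⊆ S :=
  fun _ hx => Set.mem_sInter.mp hx S ⟨hS, hX⟩

theorem exists_isTermOp2_of_mem_Sg_pair {x y v : A} (hv : v ∈ Sg ops {x, y}) :
    ∃ τ, IsTermOp2 ops τ ∧ τ x y = v := by
  let T : Set A := {v | ∃ t : Term ι ar 2, t.eval ops ![x, y] = v}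
  have hT : IsSubuniverse ops T := fun i xs hxs => by
    choose ts hts using hxs
    exact ⟨.app i ts, by simp only [Term.eval, hts]⟩
  have hxy : {x, y} ⊆ T := by
    rintro v (rfl | rfl)
    exacts [⟨.var 0, rfl⟩, ⟨.var 1, rfl⟩]
  obtain ⟨t, rfl⟩ := Sg_subset hT hxy hv
  exact ⟨fun u w => t.eval ops ![u, w], ⟨t, fun _ _ => rfl⟩, rfl⟩

end Sg

section TermOp

variable {ops : ∀ i : ι, (Fin (ar i) → A) → A}

theorem IsTermOp2.apply_self (hidem : Idempotent ops) {τ : A → A → A} (hτ : IsTermOp2 ops τ)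
    (x : A) : τ x x = x := by
  obtain ⟨t, ht⟩ := hτ
  calc τ x x = t.eval ops fun _ => x := by rw [ht]; congr 1; funext j; fin_cases j <;> rfl
    _ = x := t.eval_const hidem x

theorem IsTermOp2.mem {S : Set A} (hS : IsSubuniverse ops S) {τ : A → A → A}
    (hτ : IsTermOp2 ops τ) {x y : A} (hx : x ∈ S) (hy : y ∈ S) : τ x y ∈ S := by
  obtain ⟨t, ht⟩ := hτ
  rw [ht]
  exact t.eval_mem hS fun j => by fin_cases j <;> assumption

theorem IsTermOp3.mem {S : Set A} (hS : IsSubuniverse ops S) {g : A → A → A → A}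
    (hg : IsTermOp3 ops g) {x y z : A} (hx : x ∈ S) (hy : y ∈ S) (hz : z ∈ S) :
    g x y z ∈ S := by
  obtain ⟨t, ht⟩ := hg
  rw [ht]
  exact t.eval_mem hS fun j => by fin_cases j <;> assumption

theorem IsTermOp2.congr {B : Set A} {θ : A → A → Prop} (hθ : IsCongruenceOn ops B θ)
    {τ : A → A → A} (hτ : IsTermOp2 ops τ) {x y x' y' : A} (hx : θ x x') (hy : θ y y') :
    θ (τ x y) (τ x' y') := by
  obtain ⟨t, ht⟩ := hτ
  rw [ht, ht]
  exact hθ.eval t fun j => by fin_cases j <;> assumption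

theorem IsTermOp3.congr {B : Set A} {θ : A → A → Prop} (hθ : IsCongruenceOn ops B θ)
    {g : A → A → A → A} (hg : IsTermOp3 ops g) {x y z x' y' z' : A}
    (hx : θ x x') (hy : θ y y') (hz : θ z z') : θ (g x y z) (g x' y' z') := by
  obtain ⟨t, ht⟩ := hg
  rw [ht, ht]
  exact hθ.eval t fun j => by fin_cases j <;> assumption

theorem IsTermOp2.rel_apply_of_rel (hidem : Idempotent ops) {B : Set A} {θ : A → A → Prop}
    (hθ : IsCongruenceOn ops B θ) {τ : A → A → A} (hτ : IsTermOp2 ops τ) {c u : A}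
    (hcu : θ c u) : θ c (τ c u) := by
  have hcc : θ c c := hθ.2.2.2.1 _ _ _ hcu (hθ.2.2.1 _ _ hcu)
  simpa only [hτ.apply_self hidem] using hτ.congr hθ hcc hcu

theorem isTermOp3_fst : IsTermOp3 ops fun x _ _ => x := ⟨.var 0, fun _ _ _ => rfl⟩

theorem isTermOp3_snd : IsTermOp3 ops fun _ y _ => y := ⟨.var 1, fun _ _ _ => rfl⟩

theorem isTermOp3_thd : IsTermOp3 ops fun _ _ z => z := ⟨.var 2, fun _ _ _ => rfl⟩

theorem IsTermOp2.comp {τ : A → A → A} (hτ : IsTermOp2 ops τ) {p q : A → A → A → A}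
    (hp : IsTermOp3 ops p) (hq : IsTermOp3 ops q) :
    IsTermOp3 ops fun x y z => τ (p x y z) (q x y z) := by
  obtain ⟨t, ht⟩ := hτ
  obtain ⟨tp, hp⟩ := hp
  obtain ⟨tq, hq⟩ := hq
  refine ⟨t.subst ![tp, tq], fun x y z => ?_⟩
  show τ (p x y z) (q x y z) = _
  rw [Term.eval_subst, ht, hp, hq]
  congr 1
  funext j
  fin_cases j <;> rfl

end TermOp

theorem maj_self₂₃ [DecidableEq A] (x y : A) : maj x y y = y := by
  by_cases h : x = y <;> simp [maj, h]

theorem maj_self₁₃ [DecidableEq A] (x y : A) : maj y x y = y := by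
  simp [maj]

theorem maj_self₁₂ [DecidableEq A] (x y : A) : maj y y x = y := by
  simp [maj]

section ThinMajority

variable {ops : ∀ i : ι, (Fin (ar i) → A) → A}

theorem exists_thin_majority_of_absorbing (hidem : Idempotent ops) {K : Set A} {a c : A}
    (hK : ∀ τ, IsTermOp2 ops τ → ∀ u ∈ K, τ c u ∈ K)
    (habsorb : ∀ u ∈ K, ∃ τ, IsTermOp2 ops τ ∧ τ a u = c)
    {g : A → A → A → A} (hg : IsTermOp3 ops g)
    (h₁ : g a c c ∈ K) (h₂ : g c a c ∈ K) (h₃ : g c c a ∈ K) :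
    ∃ g' : A → A → A → A, IsTermOp3 ops g' ∧ g' a c c = c ∧ g' c a c = c ∧ g' c c a = c := by
  obtain ⟨τ₁, hτ₁, hτ₁a⟩ := habsorb _ h₁
  obtain ⟨τ₂, hτ₂, hτ₂a⟩ := habsorb _ (hK τ₁ hτ₁ _ h₂)
  obtain ⟨τ₃, hτ₃, hτ₃a⟩ := habsorb _ (hK τ₂ hτ₂ _ (hK τ₁ hτ₁ _ h₃))
  refine ⟨fun x y z => τ₃ z (τ₂ y (τ₁ x (g x y z))),
    hτ₃.comp isTermOp3_thd (hτ₂.comp isTermOp3_snd (hτ₁.comp isTermOp3_fst hg)), ?_, ?_, ?_⟩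
  · simp only [hτ₁a, hτ₂.apply_self hidem, hτ₃.apply_self hidem]
  · simp only [hτ₂a, hτ₃.apply_self hidem]
  · exact hτ₃a

theorem exists_minimal_Sg_pair [Finite A] (ops : ∀ i : ι, (Fin (ar i) → A) → A)
    (a : A) {C : Set A} (hC : C.Nonempty) :
    ∃ c ∈ C, ∀ c' ∈ C, c' ∈ Sg ops {a, c} → c ∈ Sg ops {a, c'} := by
  obtain ⟨c, hcC, hmin⟩ := exists_minimalFor_of_wellFoundedLT (· ∈ C) (fun c => Sg ops {a, c}) hC
  refine ⟨c, hcC, fun c' hc'C hc' => hmin hc'C ?_ (subset_Sg ops _ (by simp))⟩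
  exact Sg_subset (isSubuniverse_Sg ops _) (Set.insert_subset (subset_Sg ops _ (by simp))
    (Set.singleton_subset_iff.mpr hc'))

end ThinMajority

theorem stmt_13_general {ι : Type} {ar : ι → ℕ} {A : Type} [Fintype A]
    [DecidableEq A]
    (ops : ∀ i : ι, (Fin (ar i) → A) → A)
    (hidem : Idempotent ops)
    (a b : A) (θ : A → A → Prop)
    (hθ : IsCongruenceOn ops (Sg ops ({a, b} : Set A)) θ)
    (g : A → A → A → A) (hg : IsTermOp3 ops g)
    (hmaj : ∀ u v w : A, u ∈ ({a, b} : Set A) → v ∈ ({a, b} : Set A) →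
      w ∈ ({a, b} : Set A) → θ (g u v w) (maj u v w)) :
    ∃ b', θ b b' ∧ ∃ g' : A → A → A → A, IsTermOp3 ops g' ∧
      g' a b' b' = b' ∧ g' b' a b' = b' ∧ g' b' b' a = b' := by
  have hsymm := hθ.2.2.1
  have htrans := hθ.2.2.2.1
  have hb : θ b b := hθ.2.1 b (subset_Sg ops _ (by simp))
  have ha : θ a a := hθ.2.1 a (subset_Sg ops _ (by simp))
  obtain ⟨c, hbc, hmin⟩ := exists_minimal_Sg_pair ops a (C := {c | θ b c}) ⟨b, hb⟩
  have hcb : θ c b := hsymm _ _ hbc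
  have haE : a ∈ Sg ops {a, c} := subset_Sg ops _ (by simp)
  have hcE : c ∈ Sg ops {a, c} := subset_Sg ops _ (by simp)
  have hE := isSubuniverse_Sg ops {a, c}
  let K : Set A := {u | θ b u} ∩ Sg ops {a, c}
  have hK : ∀ τ, IsTermOp2 ops τ → ∀ u ∈ K, τ c u ∈ K := fun τ hτ u hu =>
    ⟨htrans _ _ _ hbc (hτ.rel_apply_of_rel hidem hθ (htrans _ _ _ hcb hu.1)), hτ.mem hE hcE hu.2⟩
  have habsorb : ∀ u ∈ K, ∃ τ, IsTermOp2 ops τ ∧ τ a u = c := fun u hu =>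
    exists_isTermOp2_of_mem_Sg_pair (hmin u hu.1 hu.2)
  have h₁ : g a c c ∈ K := ⟨hsymm _ _ (htrans _ _ _ (hg.congr hθ ha hcb hcb)
    (by simpa only [maj_self₂₃] using hmaj a b b (by simp) (by simp) (by simp))),
    hg.mem hE haE hcE hcE⟩
  have h₂ : g c a c ∈ K := ⟨hsymm _ _ (htrans _ _ _ (hg.congr hθ hcb ha hcb)
    (by simpa only [maj_self₁₃] using hmaj b a b (by simp) (by simp) (by simp))),
    hg.mem hE hcE haE hcE⟩
  have h₃ : g c c a ∈ K := ⟨hsymm _ _ (htrans _ _ _ (hg.congr hθ hcb hcb ha)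
    (by simpa only [maj_self₁₂] using hmaj b b a (by simp) (by simp) (by simp))),
    hg.mem hE hcE hcE haE⟩
  exact ⟨c, hbc, exists_thin_majority_of_absorbing hidem hK habsorb hg h₁ h₂ h₃⟩

/-- a majority edge yields a thin majority edge: there are
`b' ∈ b^θ` and a ternary term operation `g'` with
`g'(a,b',b') = g'(b',a,b') = g'(b',b',a) = b'`. -/
theorem stmt_13 {ι : Type} {ar : ι → ℕ} {A : Type} [Fintype A] [Nonempty A]
    [DecidableEq A]
    (ops : ∀ i : ι, (Fin (ar i) → A) → A)
    (hidem : Idempotent ops)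
    (a b : A) (θ : A → A → Prop)
    (hθ : IsCongruenceOn ops (Sg ops ({a, b} : Set A)) θ)
    (hneq : ¬ θ a b)
    (g : A → A → A → A) (hg : IsTermOp3 ops g)
    (hlaw : ∀ x y : A, g x (g x y y) (g x y y) = g x y y)
    (hmaj : ∀ u v w : A, u ∈ ({a, b} : Set A) → v ∈ ({a, b} : Set A) →
      w ∈ ({a, b} : Set A) → θ (g u v w) (maj u v w)) :
    ∃ b', θ b b' ∧ ∃ g' : A → A → A → A, IsTermOp3 ops g' ∧
      g' a b' b' = b' ∧ g' b' a b' = b' ∧ g' b' b' a = b' :=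
  stmt_13_general ops hidem a b θ hθ g hg hmaj

end UA
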